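/- A d×d real matrix Λ with all diagonal entries equal to 1 is a tail-dependence matrix if and only if Λ = a·B for some constant a ≥ 0 and some d×d Bernoulli-compatible matrix B; equivalently, the set of d×d tail-dependence matrices equals { M ∈ B_d^* : all diagonal entries of M equal 1 } (Theorem 3.6). -/

import Mathlib

open MeasureTheory ProbabilityTheory Filter Set
open scoped Topology

noncomputable section

/-- A Bernoulli-compatible matrix: `B i j = E[X i * X j]` for some random vector `X`
taking values in `{0,1}^d` on some probability space. -/
def IsBernoulliCompatible {d : ℕ} (B : Matrix (Fin d) (Fin d) ℝ) : Prop :=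
  ∃ (Ω : Type) (_ : MeasurableSpace Ω) (μ : Measure Ω),
    IsProbabilityMeasure μ ∧
    ∃ X : Ω → Fin d → ℝ, Measurable X ∧
      (∀ ω i, X ω i = 0 ∨ X ω i = 1) ∧
      (∀ i j, B i j = ∫ ω, X ω i * X ω j ∂μ)

/-- The (lower) tail-dependence coefficient of `Yi` and `Yj` exists and equals `l`:
`P(Yi ≤ u, Yj ≤ u)/u → l` as `u ↓ 0`. -/
def HasTailDepCoeff {Ω : Type} [MeasurableSpace Ω] (μ : Measure Ω)
    (Yi Yj : Ω → ℝ) (l : ℝ) : Prop :=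
  Filter.Tendsto (fun u : ℝ => (μ {ω | Yi ω ≤ u ∧ Yj ω ≤ u}).toReal / u)
    (nhdsWithin 0 (Set.Ioi 0)) (nhds l)

/-- The uniform distribution on `[0,1]`. -/
def stdUniform : Measure ℝ := volume.restrict (Set.Icc (0:ℝ) 1)

/-- A tail-dependence matrix: the matrix of pairwise (lower) tail-dependence coefficients
of some random vector with standard uniform margins. -/
def IsTailDependenceMatrix {d : ℕ} (Λ : Matrix (Fin d) (Fin d) ℝ) : Prop :=
  ∃ (Ω : Type) (_ : MeasurableSpace Ω) (μ : Measure Ω),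
    IsProbabilityMeasure μ ∧
    ∃ Y : Ω → Fin d → ℝ, Measurable Y ∧
      (∀ i, μ.map (fun ω => Y ω i) = stdUniform) ∧
      (∀ i j, HasTailDepCoeff μ (fun ω => Y ω i) (fun ω => Y ω j) (Λ i j))

/-!
The cone `B_d^*` consists of the matrices `momentMatrix c = ∑ₓ c x • x xᵀ` with `c ≥ 0`.

If `Λ` is the tail-dependence matrix of `Y`, then for `w > 0` the matrix of
`P(Y_i ≤ w, Y_j ≤ w) / w` is `momentMatrix` of the masses of the cells `{1{Y ≤ w} = x}` divided
by `w`. Off the cell `x = 0`, which enters no entry, these weights lie in `[0, 1]` because the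
margins are uniform, so `Λ` is a limit of points of the image of the compact cube `[0, 1]^{2^d}`
under the continuous map `momentMatrix`, a closed set.

Conversely, if `Λ = a • B` with `B_ij = P(T_i ∩ T_j)` and `Λ_ii = 1`, then `P(T_i) = 1/a =: p`.
With `U` uniform and independent of the events, put `Y_i = p U` on `T_i` and
`Y_i = p + (1 - p) U` off `T_i`: each `Y_i` is uniform, and for `u < p` only the events matter,
`P(Y_i ≤ u, Y_j ≤ u) = P(T_i ∩ T_j) u / p`.
-/

lemma stdUniform_Iic (y : ℝ) : stdUniform (Iic y) = ENNReal.ofReal (min y 1) := by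
  have h : Iic y ∩ Icc (0 : ℝ) 1 = Icc 0 (min y 1) := by
    ext t
    simp only [mem_inter_iff, mem_Iic, mem_Icc, le_min_iff]
    tauto
  rw [stdUniform, Measure.restrict_apply measurableSet_Iic, h, Real.volume_Icc, sub_zero]

instance : IsProbabilityMeasure stdUniform :=
  ⟨by rw [stdUniform, Measure.restrict_apply_univ, Real.volume_Icc, sub_zero, ENNReal.ofReal_one]⟩

lemma measureReal_le_self_of_map_eq_stdUniform {Ω : Type*} [MeasurableSpace Ω] {μ : Measure Ω}
    {Y : Ω → ℝ} (hY : Measurable Y) (hmap : μ.map Y = stdUniform) {w : ℝ} (hw : 0 ≤ w) :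
    μ.real {ω | Y ω ≤ w} ≤ w := by
  have : μ {ω | Y ω ≤ w} = stdUniform (Iic w) := by
    rw [← hmap, Measure.map_apply hY measurableSet_Iic]; rfl
  rw [measureReal_def, this, stdUniform_Iic, ENNReal.toReal_ofReal (le_min hw zero_le_one)]
  exact min_le_left w 1

section MomentMatrix

variable {ι : Type*} [Fintype ι] [DecidableEq ι]

def momentMatrix (p : (ι → Bool) → ℝ) : Matrix ι ι ℝ :=
  Matrix.of fun i j => ∑ x with x i && x j, p x

lemma momentMatrix_apply (p : (ι → Bool) → ℝ) (i j : ι) :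
    momentMatrix p i j = ∑ x with x i && x j, p x := rfl

lemma continuous_momentMatrix : Continuous (momentMatrix (ι := ι)) := by
  unfold momentMatrix
  fun_prop

lemma momentMatrix_div (p : (ι → Bool) → ℝ) (c : ℝ) :
    momentMatrix (fun x => p x / c) = c⁻¹ • momentMatrix p := by
  ext i j
  simp only [momentMatrix_apply, Matrix.smul_apply, smul_eq_mul, Finset.mul_sum, div_eq_inv_mul]

lemma momentMatrix_update_false (p : (ι → Bool) → ℝ) (c : ℝ) :
    momentMatrix (Function.update p (fun _ => false) c) = momentMatrix p := by
  ext i j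
  refine Finset.sum_congr rfl fun x hx => Function.update_of_ne ?_ _ _
  rintro rfl
  simp at hx

end MomentMatrix

lemma isBernoulliCompatible_momentMatrix {d : ℕ} (q : (Fin d → Bool) → ℝ) (hq0 : ∀ x, 0 ≤ q x)
    (hq1 : ∑ x, q x = 1) : IsBernoulliCompatible (momentMatrix q) := by
  let μ : Measure (Fin d → Bool) := ∑ x, ENNReal.ofReal (q x) • Measure.dirac x
  have hμ : ∀ x, μ.real {x} = q x := fun x => by
    simp [μ, measureReal_def, Set.indicator_apply, hq0]
  have : IsProbabilityMeasure μ := ⟨by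
    simp [μ, ← ENNReal.ofReal_sum_of_nonneg (fun x _ => hq0 x), hq1]⟩
  refine ⟨Fin d → Bool, inferInstance, μ, this, fun x i => if x i then 1 else 0,
    measurable_of_finite _, fun x i => by cases x i <;> simp, fun i j => ?_⟩
  rw [integral_fintype .of_finite, momentMatrix_apply, Finset.sum_filter]
  refine Finset.sum_congr rfl fun x _ => ?_
  by_cases hi : x i <;> by_cases hj : x j <;> simp [hi, hj, hμ]

lemma exists_smul_isBernoulliCompatible_eq_momentMatrix {d : ℕ} (c : (Fin d → Bool) → ℝ)
    (hc : ∀ x, 0 ≤ c x) :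
    ∃ (a : ℝ) (B : Matrix (Fin d) (Fin d) ℝ),
      0 ≤ a ∧ IsBernoulliCompatible B ∧ momentMatrix c = a • B := by
  set a := ∑ x, c x
  have ha : 0 ≤ a := Finset.sum_nonneg fun x _ => hc x
  rcases ha.eq_or_lt with ha0 | ha0
  · have hc0 : c = 0 := funext fun x =>
      (Finset.sum_eq_zero_iff_of_nonneg fun x _ => hc x).1 ha0.symm x (Finset.mem_univ x)
    refine ⟨0, momentMatrix (Pi.single (fun _ => false) 1), le_rfl,
      isBernoulliCompatible_momentMatrix _ (fun x => ?_) (by simp), ?_⟩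
    · by_cases hx : x = fun _ => false <;> simp [hx]
    · ext i j
      simp [momentMatrix_apply, hc0]
  · refine ⟨a, momentMatrix fun x => c x / a, ha, isBernoulliCompatible_momentMatrix _
      (fun x => div_nonneg (hc x) ha) ?_, ?_⟩
    · rw [← Finset.sum_div, div_self ha0.ne']
    · rw [momentMatrix_div, smul_inv_smul₀ ha0.ne']

section Forward

variable {Ω ι : Type*} [MeasurableSpace Ω] {μ : Measure Ω} [IsFiniteMeasure μ]
  [Fintype ι] [DecidableEq ι]

lemma measureReal_and_eq_momentMatrix {Z : Ω → ι → Bool} (hZ : Measurable Z)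
    (i j : ι) :
    μ.real {ω | Z ω i && Z ω j} = momentMatrix (fun x => μ.real (Z ⁻¹' {x})) i j := by
  rw [momentMatrix_apply,
    sum_measureReal_preimage_singleton _ fun x _ => hZ (measurableSet_singleton x)]
  congr 1
  ext ω
  simp

lemma tailRatio_mem_image_momentMatrix {Y : Ω → ι → ℝ}
    (hY : ∀ i, Measurable fun ω => Y ω i) (hmarg : ∀ i, μ.map (fun ω => Y ω i) = stdUniform)
    {w : ℝ} (hw : 0 < w) :
    Matrix.of (fun i j => μ.real {ω | Y ω i ≤ w ∧ Y ω j ≤ w} / w) ∈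
      momentMatrix '' univ.pi fun _ => Icc 0 1 := by
  set Z : Ω → ι → Bool := fun ω i => decide (Y ω i ≤ w)
  have hZ : Measurable Z := measurable_pi_lambda _ fun i =>
    measurable_to_bool (by simpa [Z, preimage] using measurableSet_le (hY i) measurable_const)
  refine ⟨Function.update (fun x => μ.real (Z ⁻¹' {x}) / w) (fun _ => false) 0, ?_, ?_⟩
  · intro x _
    by_cases hx : x = fun _ => false
    · simp [hx]
    obtain ⟨i, hi⟩ : ∃ i, x i = true := by
      by_contra! h
      exact hx (funext fun i => by simpa using h i)
    have hsub : Z ⁻¹' {x} ⊆ {ω | Y ω i ≤ w} := fun ω hω => by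
      simpa [Z, hi] using congrFun hω i
    rw [Function.update_of_ne hx]
    refine ⟨by positivity, (div_le_one hw).2 ?_⟩
    exact (measureReal_mono hsub).trans
      (measureReal_le_self_of_map_eq_stdUniform (hY i) (hmarg i) hw.le)
  · rw [momentMatrix_update_false, momentMatrix_div]
    ext i j
    simp [← measureReal_and_eq_momentMatrix hZ, Z, div_eq_inv_mul]

end Forward

theorem IsTailDependenceMatrix.exists_eq_momentMatrix {d : ℕ} {Λ : Matrix (Fin d) (Fin d) ℝ}
    (hΛ : IsTailDependenceMatrix Λ) : ∃ c, (∀ x, 0 ≤ c x) ∧ Λ = momentMatrix c := by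
  obtain ⟨Ω, _, μ, _, Y, hY, hmarg, htail⟩ := hΛ
  have hclosed : IsClosed (momentMatrix '' univ.pi fun _ : Fin d → Bool => Icc (0 : ℝ) 1) :=
    ((isCompact_univ_pi fun _ => isCompact_Icc).image continuous_momentMatrix).isClosed
  have hlim : Tendsto (fun w => Matrix.of fun i j => μ.real {ω | Y ω i ≤ w ∧ Y ω j ≤ w} / w)
      (𝓝[>] 0) (𝓝 Λ) :=
    tendsto_pi_nhds.2 fun i => tendsto_pi_nhds.2 fun j => htail i j
  obtain ⟨c, hc, rfl⟩ := hclosed.mem_of_tendsto hlim <|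
    eventually_mem_nhdsWithin.mono fun w hw =>
      tailRatio_mem_image_momentMatrix (fun i => measurable_pi_iff.1 hY i) hmarg hw
  exact ⟨c, fun x => (hc x (mem_univ x)).1, rfl⟩

lemma stdUniform_mixture_Iic {p : ℝ} (hp0 : 0 < p) (hp1 : p ≤ 1) (y : ℝ) :
    ENNReal.ofReal p * stdUniform {u | p * u ≤ y} +
      ENNReal.ofReal (1 - p) * stdUniform {u | p + (1 - p) * u ≤ y} =
      ENNReal.ofReal (min y 1) := by
  have hscaled : {u | p * u ≤ y} = Iic (y / p) := by
    ext u; simp [le_div_iff₀ hp0, mul_comm]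
  rcases hp1.eq_or_lt with rfl | hp1
  · rw [hscaled, stdUniform_Iic]
    simp
  have hq : 0 < 1 - p := sub_pos.2 hp1
  have hshifted : {u | p + (1 - p) * u ≤ y} = Iic ((y - p) / (1 - p)) := by
    ext u; simp [le_div_iff₀ hq, mul_comm, le_sub_iff_add_le']
  rw [hscaled, hshifted, stdUniform_Iic, stdUniform_Iic, ← ENNReal.ofReal_mul hp0.le,
    ← ENNReal.ofReal_mul hq.le]
  rcases le_or_gt y p with hyp | hyp
  · have hlow : p * min (y / p) 1 = y := by
      rw [min_eq_left ((div_le_one hp0).2 hyp), mul_div_cancel₀ _ hp0.ne']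
    have hhigh : (1 - p) * min ((y - p) / (1 - p)) 1 ≤ 0 :=
      mul_nonpos_of_nonneg_of_nonpos hq.le
        ((min_le_left _ _).trans (div_nonpos_of_nonpos_of_nonneg (by linarith) hq.le))
    rw [hlow, ENNReal.ofReal_of_nonpos hhigh, add_zero, min_eq_left (hyp.trans hp1.le)]
  · have hlow : p * min (y / p) 1 = p := by
      rw [min_eq_right ((one_le_div hp0).2 hyp.le), mul_one]
    have hhigh : (1 - p) * min ((y - p) / (1 - p)) 1 = min (y - p) (1 - p) := by
      rw [mul_min_of_nonneg _ _ hq.le, mul_div_cancel₀ _ hq.ne', mul_one]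
    rw [hlow, hhigh, ← ENNReal.ofReal_add hp0.le (le_min (by linarith) hq.le),
      ← min_add_add_left]
    congr 2 <;> ring

section TailModel

variable {Ω : Type} {ι : Type*} {T : ι → Set Ω} {p : ℝ} {i : ι}

open Classical in
def tailModel (T : ι → Set Ω) (p : ℝ) (z : Ω × ℝ) (i : ι) : ℝ :=
  if z.1 ∈ T i then p * z.2 else p + (1 - p) * z.2

lemma tailModel_le_iff (hp0 : 0 < p) (hp1 : p ≤ 1) {u : ℝ} (hu : u < p) {z : Ω × ℝ}
    (hz : 0 ≤ z.2) : tailModel T p z i ≤ u ↔ z.1 ∈ T i ∧ z.2 ≤ u / p := by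
  by_cases hzT : z.1 ∈ T i
  · simp [tailModel, hzT, le_div_iff₀ hp0, mul_comm]
  · simp only [tailModel, hzT, if_false, false_and, iff_false, not_le]
    nlinarith

variable [MeasurableSpace Ω] {μ : Measure Ω}

lemma measurable_tailModel (hT : MeasurableSet (T i)) :
    Measurable fun z => tailModel T p z i :=
  Measurable.ite (measurable_fst hT) (measurable_snd.const_mul p)
    (measurable_const.add (measurable_snd.const_mul _))

lemma map_tailModel [IsProbabilityMeasure μ] (hT : MeasurableSet (T i)) (hTp : μ.real (T i) = p)
    (hp0 : 0 < p) (hp1 : p ≤ 1) :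
    (μ.prod stdUniform).map (fun z => tailModel T p z i) = stdUniform := by
  refine Measure.ext_of_Iic _ _ fun y => ?_
  have hpre : (fun z => tailModel T p z i) ⁻¹' Iic y =
      T i ×ˢ {u | p * u ≤ y} ∪ (T i)ᶜ ×ˢ {u | p + (1 - p) * u ≤ y} := by
    ext z
    by_cases hz : z.1 ∈ T i <;> simp [tailModel, hz]
  have hμT : μ (T i) = ENNReal.ofReal p := by rw [← hTp, ofReal_measureReal]
  have hμTc : μ (T i)ᶜ = ENNReal.ofReal (1 - p) := by
    rw [prob_compl_eq_one_sub hT, hμT, ENNReal.ofReal_sub _ hp0.le, ENNReal.ofReal_one]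
  rw [Measure.map_apply (measurable_tailModel hT) measurableSet_Iic, hpre,
    measure_union (disjoint_compl_right.set_prod_left _ _)
      (hT.compl.prod (measurableSet_le (by fun_prop) measurable_const)),
    Measure.prod_prod, Measure.prod_prod, hμT, hμTc, stdUniform_mixture_Iic hp0 hp1,
    stdUniform_Iic]

lemma prod_stdUniform_tailModel_le_and_le (hp0 : 0 < p) (hp1 : p ≤ 1) {u : ℝ} (hu : u < p)
    (i j : ι) :
    (μ.prod stdUniform) {z | tailModel T p z i ≤ u ∧ tailModel T p z j ≤ u} =
      μ (T i ∩ T j) * ENNReal.ofReal (u / p) := by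
  set S := (T i ∩ T j) ×ˢ Iic (u / p)
  have hnull : (μ.prod stdUniform) (univ ×ˢ Iio 0) = 0 := by
    rw [Measure.prod_prod, measure_mono_null Iio_subset_Iic_self (by simp [stdUniform_Iic]),
      mul_zero]
  have hsub : {z | tailModel T p z i ≤ u ∧ tailModel T p z j ≤ u} ⊆ S ∪ univ ×ˢ Iio 0 := by
    rintro z ⟨hzi, hzj⟩
    by_cases hz : 0 ≤ z.2
    · rw [tailModel_le_iff hp0 hp1 hu hz] at hzi hzj
      exact Or.inl ⟨⟨hzi.1, hzj.1⟩, hzi.2⟩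
    · exact Or.inr ⟨mem_univ _, not_le.1 hz⟩
  have hsup : S ⊆ {z | tailModel T p z i ≤ u ∧ tailModel T p z j ≤ u} := by
    rintro z ⟨⟨hzi, hzj⟩, hz⟩
    simp_all [tailModel, le_div_iff₀ hp0, mul_comm]
  have hS : (μ.prod stdUniform) S = μ (T i ∩ T j) * ENNReal.ofReal (u / p) := by
    rw [Measure.prod_prod, stdUniform_Iic, min_eq_left ((div_le_one hp0).2 hu.le)]
  refine le_antisymm ?_ (hS ▸ measure_mono hsup)
  calc _ ≤ (μ.prod stdUniform) (S ∪ univ ×ˢ Iio 0) := measure_mono hsub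
    _ ≤ (μ.prod stdUniform) S + 0 := hnull ▸ measure_union_le _ _
    _ = _ := by rw [add_zero, hS]

lemma hasTailDepCoeff_tailModel (hp0 : 0 < p) (hp1 : p ≤ 1) (i j : ι) :
    HasTailDepCoeff (μ.prod stdUniform) (fun z => tailModel T p z i)
      (fun z => tailModel T p z j) (μ.real (T i ∩ T j) / p) := by
  refine tendsto_const_nhds.congr' ?_
  filter_upwards [Ioo_mem_nhdsGT hp0] with u ⟨hu0, hu⟩
  rw [prod_stdUniform_tailModel_le_and_le hp0 hp1 hu, ENNReal.toReal_mul,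
    ENNReal.toReal_ofReal (div_nonneg hu0.le hp0.le), ← measureReal_def]
  field_simp

end TailModel

lemma integral_mul_eq_measureReal_inter {Ω : Type*} [MeasurableSpace Ω] {μ : Measure Ω}
    {f g : Ω → ℝ} (hf : Measurable f) (hg : Measurable g) (hf01 : ∀ ω, f ω = 0 ∨ f ω = 1)
    (hg01 : ∀ ω, g ω = 0 ∨ g ω = 1) :
    ∫ ω, f ω * g ω ∂μ = μ.real ({ω | f ω = 1} ∩ {ω | g ω = 1}) := by
  have hfg : (fun ω => f ω * g ω) = ({ω | f ω = 1} ∩ {ω | g ω = 1}).indicator 1 := by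
    funext ω
    rcases hf01 ω with h | h <;> rcases hg01 ω with h' | h' <;> simp [h, h']
  rw [hfg]
  exact integral_indicator_one
    ((hf (measurableSet_singleton 1)).inter (hg (measurableSet_singleton 1)))

theorem isTailDependenceMatrix_smul {d : ℕ} {a : ℝ} {B : Matrix (Fin d) (Fin d) ℝ}
    (hB : IsBernoulliCompatible B) (hdiag : ∀ i, a * B i i = 1) :
    IsTailDependenceMatrix (a • B) := by
  obtain ⟨Ω, _, μ, _, X, hX, hX01, hXB⟩ := hB
  set T : Fin d → Set Ω := fun i => {ω | X ω i = 1}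
  have hXi : ∀ i, Measurable fun ω => X ω i := measurable_pi_iff.1 hX
  have hT : ∀ i, MeasurableSet (T i) := fun i => hXi i (measurableSet_singleton 1)
  have hBT : ∀ i j, B i j = μ.real (T i ∩ T j) := fun i j => by
    rw [hXB, integral_mul_eq_measureReal_inter (hXi i) (hXi j) (hX01 · i) (hX01 · j)]
  have hp : ∀ i, μ.real (T i) = a⁻¹ ∧ 0 < a⁻¹ ∧ a⁻¹ ≤ 1 := fun i => by
    have hai : a * μ.real (T i) = 1 := by rw [← inter_self (T i), ← hBT, hdiag]
    have hTi : μ.real (T i) = a⁻¹ := eq_inv_of_mul_eq_one_right hai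
    refine ⟨hTi, ?_, hTi ▸ measureReal_le_one⟩
    rw [← hTi]
    refine measureReal_nonneg.lt_of_ne fun h => ?_
    simp [← h] at hai
  refine ⟨Ω × ℝ, inferInstance, μ.prod stdUniform, inferInstance, fun z i => tailModel T a⁻¹ z i,
    measurable_pi_lambda _ fun i => measurable_tailModel (hT i),
    fun i => map_tailModel (hT i) (hp i).1 (hp i).2.1 (hp i).2.2, fun i j => ?_⟩
  convert hasTailDepCoeff_tailModel (μ := μ) (hp i).2.1 (hp i).2.2 i j using 1
  rw [Matrix.smul_apply, hBT, smul_eq_mul, div_inv_eq_mul, mul_comm]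

/-- Theorem 3.6: a square matrix with unit diagonal is a tail-dependence matrix if and only if
it is a nonnegative constant multiple of a Bernoulli-compatible matrix. -/
theorem tail_dependence_iff_BdStar {d : ℕ} (Λ : Matrix (Fin d) (Fin d) ℝ)
    (hdiag : ∀ i, Λ i i = 1) :
    IsTailDependenceMatrix Λ ↔
      ∃ (a : ℝ) (B : Matrix (Fin d) (Fin d) ℝ),
        0 ≤ a ∧ IsBernoulliCompatible B ∧ Λ = a • B := by
  constructor
  · intro hΛ
    obtain ⟨c, hc, rfl⟩ := hΛ.exists_eq_momentMatrix
    exact exists_smul_isBernoulliCompatible_eq_momentMatrix c hc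
  · rintro ⟨a, B, -, hB, rfl⟩
    exact isTailDependenceMatrix_smul hB hdiag
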